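/- In the trading graph constructed by the reduction from a 3D-matching instance (X,Y,Z,T) with |X|=|Y|=|Z|=n, there exists an execution with exactly 8n exchanges if and only if the 3D-matching instance admits a perfect matching (a set S ⊆ T of n pairwise-disjoint triples). -/

import Mathlib

structure TState (N M : Type) where
  own : N → Finset M
  dem : N → Finset M

variable {N M : Type} [DecidableEq N] [DecidableEq M]

/-- In a trading cycle `c = [(i₁,j₁),…,(i_k,j_k)]`, agent `i_t` receives item `j_t`;
`gives c` pairs each agent with the item he gives, namely `j_{t-1}` (cyclically). -/
def gives (c : List (N × M)) : List (N × M) :=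
  (c.map Prod.fst).zip ((c.rotate (c.length - 1)).map Prod.snd)

/-- A valid cycle step: nonempty, visits each agent and each item at most once,
every participating agent receives an item he currently demands and gives an item
he currently owns. -/
def ValidCycle (s : TState N M) (c : List (N × M)) : Prop :=
  c ≠ [] ∧ (c.map Prod.fst).Nodup ∧ (c.map Prod.snd).Nodup ∧
    (∀ p ∈ c, p.2 ∈ s.dem p.1) ∧ (∀ p ∈ gives c, p.2 ∈ s.own p.1)

/-- The state after executing a cycle: every used demand edge is reversed into a
supply edge (the received item moves into the agent's supply and leaves his demand),
and every used supply edge is removed. -/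
def stepCycle (s : TState N M) (c : List (N × M)) : TState N M where
  own i := ((s.own i).filter fun j => (i, j) ∉ gives c) ∪
      ((c.filter fun p => decide (p.1 = i)).map Prod.snd).toFinset
  dem i := (s.dem i).filter fun j => (i, j) ∉ c

/-- An execution is a sequence of cycle steps, each valid in the successively
updated state. -/
def ValidExec (s : TState N M) : List (List (N × M)) → Prop
  | [] => True
  | c :: r => ValidCycle s c ∧ ValidExec (stepCycle s c) r

/-- Total number of exchanges (items received) in an execution. -/
def exchanges (r : List (List (N × M))) : ℕ := (r.map List.length).sum

/-- Number of items agent `i` receives during execution `r`. -/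
def receivedCount (r : List (List (N × M))) (i : N) : ℕ :=
  (r.map fun c => c.countP fun p => decide (p.1 = i)).sum

/-- Number of items agent `i` gives during execution `r`. -/
def givenCount (r : List (List (N × M))) (i : N) : ℕ :=
  (r.map fun c => (gives c).countP fun p => decide (p.1 = i)).sum

/-- A static execution allocates each item at most once. -/
def StaticExec (r : List (List (N × M))) : Prop := (r.flatten.map Prod.snd).Nodup

/-- Agents of the reduction from 3D-matching: `ga t 0, ga t 1, ga t 2` are the
gadget agents `(xyz)₂, (xyz)₄, (xyz)₆` for the triple `t = (x,y,z)`; `ya y = y₂`,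
`za z = z₁`, `xa1 x = x₁`, `xa3 x = x₃`. -/
inductive RAg (n : ℕ) where
  | ga : (Fin n × Fin n × Fin n) → Fin 3 → RAg n
  | ya : Fin n → RAg n
  | za : Fin n → RAg n
  | xa1 : Fin n → RAg n
  | xa3 : Fin n → RAg n
deriving DecidableEq

/-- Items of the reduction: `gi t 0, gi t 1, gi t 2, gi t 3` are the gadget items
`(xyz)₁, (xyz)₃, (xyz)₅, (xyz)₇`; `yi y = y₁`, `zi z = z₂`, `xi x = x₂`. -/
inductive RIt (n : ℕ) where
  | gi : (Fin n × Fin n × Fin n) → Fin 4 → RIt n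
  | yi : Fin n → RIt n
  | zi : Fin n → RIt n
  | xi : Fin n → RIt n
deriving DecidableEq

/-- Supply sets of the reduction instance built from the triple set `T`. -/
def RS (n : ℕ) (T : Finset (Fin n × Fin n × Fin n)) : RAg n → Finset (RIt n)
  | .ga t i => if t ∈ T then {.gi t i.castSucc} else ∅
  | .ya y => {.yi y}
  | .za z => (T.filter fun t => t.2.2 = z).image fun t => .gi t 3
  | .xa1 _ => Finset.univ.image RIt.zi
  | .xa3 x => {.xi x}

/-- Demand sets of the reduction instance built from the triple set `T`. -/
def RD (n : ℕ) (T : Finset (Fin n × Fin n × Fin n)) : RAg n → Finset (RIt n)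
  | .ga t i =>
      if t ∈ T then
        (if i = 0 then {.gi t 1, .gi t 3}
         else if i = 1 then {.yi t.2.1}
         else {.gi t 3})
      else ∅
  | .ya y => (T.filter fun t => t.2.1 = y).image fun t => .gi t 2
  | .za z => {.zi z}
  | .xa1 x => {.xi x}
  | .xa3 x => (T.filter fun t => t.1 = x).image fun t => .gi t 0

/-- Whether a demand edge (agent receives item) belongs to the class
`E₀ = {(x₁, x₂)}`. -/
def isE0 {n : ℕ} : RAg n × RIt n → Bool
  | (.xa1 x, .xi x') => x == x'
  | _ => false

/-- Whether a demand edge belongs to the class `E₆ = {((xyz)₂, (xyz)₇)}`. -/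
def isE6 {n : ℕ} : RAg n × RIt n → Bool
  | (.ga t i, .gi t' j) => t == t' && i == 0 && j == 3
  | _ => false

/-- The number of large `X`-cycles in an execution: cycle steps using an `E₀` edge
but no `E₆` edge. -/
def numLarge {n : ℕ} (r : List (List (RAg n × RIt n))) : ℕ :=
  r.countP fun c => (c.countP isE0 != 0) && (c.countP isE6 == 0)

/-- The number of `Y`-cycles in an execution: cycle steps using no `E₀` edge. -/
def numY {n : ℕ} (r : List (List (RAg n × RIt n))) : ℕ :=
  r.countP fun c => c.countP isE0 == 0

/-- A set of triples is a partial 3D-matching: pairwise disjoint in each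
coordinate. -/
def IsPartialMatching {n : ℕ} (S : Finset (Fin n × Fin n × Fin n)) : Prop :=
  ∀ t ∈ S, ∀ t' ∈ S, t ≠ t' →
    t.1 ≠ t'.1 ∧ t.2.1 ≠ t'.2.1 ∧ t.2.2 ≠ t'.2.2

/-!
Count how often each demand edge is used. Following the items around a single cycle shows
that `(xyz)₄ ← y₁` is used at most as often as `(xyz)₂ ← (xyz)₃`, and this at most as often as
`x₃ ← (xyz)₁`, while `(xyz)₂ ← (xyz)₇`, `(xyz)₆ ← (xyz)₇` and `y₂ ← (xyz)₅` are used at most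
as often as `z₁` hands over `(xyz)₇`. Since `x₃` hands over `x₂`, `y₂` hands over `y₁` and
`z₁` receives `z₂` at most once, each element serves at most one triple in each of these
events. Hence the gadgets contribute at most `3n + 3n` exchanges and the edges `x₁ ← x₂`,
`z₁ ← z₂` at most `2n`. With `8n` exchanges all bounds are tight, and the `n` triples whose
`(xyz)₇` leaves `z₁` also use `x₃ ← (xyz)₁` and `(xyz)₄ ← y₁`: they form a perfect matching.
Conversely, the triples of a perfect matching are executed one after the other, each by its
small `X`-cycle followed by its `Y`-cycle, with `8` exchanges per triple.
-/

set_option linter.unusedSectionVars false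

lemma List.Nodup.count_le_count {α : Type} [BEq α] [LawfulBEq α] {l l' : List α} {a b : α}
    (hl : l.Nodup) (h : a ∈ l → b ∈ l') : l.count a ≤ l'.count b := by
  rw [hl.count]
  split_ifs with ha
  exacts [List.count_pos_iff.2 (h ha), Nat.zero_le _]

lemma List.Nodup.count_le_count_add_count {α : Type} [BEq α] [LawfulBEq α] {l l₁ l₂ : List α}
    {a b₁ b₂ : α} (hl : l.Nodup) (h : a ∈ l → b₁ ∈ l₁ ∨ b₂ ∈ l₂) :
    l.count a ≤ l₁.count b₁ + l₂.count b₂ := by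
  rw [hl.count]
  split_ifs with ha
  · rcases h ha with h | h <;> have := List.count_pos_iff.2 h <;> omega
  · exact Nat.zero_le _

lemma List.Nodup.sum_count_le_count {ι α : Type} [BEq α] [LawfulBEq α] {l l' : List α}
    {F : Finset ι} {f : ι → α} {b : α} (hl : l.Nodup)
    (huniq : ∀ a ∈ F, ∀ a' ∈ F, f a ∈ l → f a' ∈ l → a = a')
    (h : ∀ a ∈ F, f a ∈ l → b ∈ l') : ∑ a ∈ F, l.count (f a) ≤ l'.count b := by
  classical
  simp only [hl.count, ← Finset.card_filter]
  by_cases hex : ∃ a ∈ F, f a ∈ l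
  · obtain ⟨a, ha, hal⟩ := hex
    refine (Finset.card_le_one.2 fun x hx y hy => ?_).trans (List.count_pos_iff.2 (h a ha hal))
    simp only [Finset.mem_filter] at hx hy
    exact huniq x hx.1 y hy.1 hx.2 hy.2
  · simp only [not_exists, not_and] at hex
    simp [Finset.filter_false_of_mem hex]

lemma Finset.sum_union_le_add {ι : Type} [DecidableEq ι] (s t : Finset ι) (f : ι → ℕ) :
    ∑ i ∈ s ∪ t, f i ≤ ∑ i ∈ s, f i + ∑ i ∈ t, f i := by
  rw [← Finset.sum_union_inter]
  exact Nat.le_add_right _ _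

section Fibers

variable {ι β : Type} [DecidableEq β] {s : Finset ι} {g : ι → β} {w : ι → ℕ}

lemma Finset.sum_le_card_of_sum_fiber_le_one [Fintype β]
    (h : ∀ b, ∑ a ∈ s with g a = b, w a ≤ 1) : ∑ a ∈ s, w a ≤ Fintype.card β := by
  rw [← Finset.sum_fiberwise_of_maps_to (g := g) (t := Finset.univ) fun _ _ => Finset.mem_univ _]
  simpa using Finset.sum_le_card_nsmul Finset.univ _ 1 fun b _ => h b

lemma Finset.le_one_of_sum_fiber_le_one (h : ∀ b, ∑ a ∈ s with g a = b, w a ≤ 1) {a : ι}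
    (ha : a ∈ s) : w a ≤ 1 :=
  (Finset.single_le_sum (s := {x ∈ s | g x = g a}) (f := w) (fun _ _ => Nat.zero_le _)
    (Finset.mem_filter.2 ⟨ha, rfl⟩)).trans (h (g a))

lemma Finset.apply_ne_of_sum_fiber_le_one {a a' : ι} (h : ∑ x ∈ s with g x = g a, w x ≤ 1)
    (ha : a ∈ s) (ha' : a' ∈ s) (hne : a ≠ a') (hw : 0 < w a) (hw' : 0 < w a') : g a ≠ g a' :=
  fun heq => hne (Finset.sum_le_one_iff.1 h a a' (by simp [ha]) (by simp [ha', heq])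
    hw.ne' hw'.ne').1

lemma Finset.card_filter_pos_eq_sum (h : ∀ a ∈ s, w a ≤ 1) :
    ({a ∈ s | 0 < w a} : Finset ι).card = ∑ a ∈ s, w a := by
  rw [Finset.card_filter]
  refine Finset.sum_congr rfl fun a ha => ?_
  have := h a ha
  split_ifs <;> omega

end Fibers

lemma isPartialMatching_of_sum_fiber_le_one {n : ℕ} {T S : Finset (Fin n × Fin n × Fin n)}
    (wx wy wz : Fin n × Fin n × Fin n → ℕ) (hx : ∀ x, ∑ t ∈ T with t.1 = x, wx t ≤ 1)
    (hy : ∀ y, ∑ t ∈ T with t.2.1 = y, wy t ≤ 1) (hz : ∀ z, ∑ t ∈ T with t.2.2 = z, wz t ≤ 1)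
    (hST : S ⊆ T) (hS : ∀ t ∈ S, 0 < wx t ∧ 0 < wy t ∧ 0 < wz t) : IsPartialMatching S :=
  fun t ht t' ht' hne =>
    ⟨Finset.apply_ne_of_sum_fiber_le_one (g := fun t => t.1) (hx _) (hST ht) (hST ht') hne
        (hS t ht).1 (hS t' ht').1,
      Finset.apply_ne_of_sum_fiber_le_one (g := fun t => t.2.1) (hy _) (hST ht) (hST ht') hne
        (hS t ht).2.1 (hS t' ht').2.1,
      Finset.apply_ne_of_sum_fiber_le_one (g := fun t => t.2.2) (hz _) (hST ht) (hST ht') hne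
        (hS t ht).2.2 (hS t' ht').2.2⟩

lemma gives_map_fst (c : List (N × M)) : (gives c).map Prod.fst = c.map Prod.fst :=
  List.map_fst_zip (by simp)

lemma gives_map_snd_perm (c : List (N × M)) :
    ((gives c).map Prod.snd).Perm (c.map Prod.snd) := by
  rw [gives, List.map_snd_zip (by simp), List.map_rotate]
  exact List.rotate_perm _ _

lemma mem_own_stepCycle {s : TState N M} {c : List (N × M)} {i : N} {j : M} :
    j ∈ (stepCycle s c).own i ↔ (j ∈ s.own i ∧ (i, j) ∉ gives c) ∨ (i, j) ∈ c := by
  simp only [stepCycle, Finset.mem_union, Finset.mem_filter, List.mem_toFinset, List.mem_map,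
    List.mem_filter, decide_eq_true_eq]
  constructor
  · rintro (h | ⟨⟨i', j'⟩, ⟨hp, rfl⟩, rfl⟩)
    exacts [Or.inl h, Or.inr hp]
  · rintro (h | h)
    exacts [Or.inl h, Or.inr ⟨(i, j), ⟨h, rfl⟩, rfl⟩]

lemma mem_dem_stepCycle {s : TState N M} {c : List (N × M)} {i : N} {j : M} :
    j ∈ (stepCycle s c).dem i ↔ j ∈ s.dem i ∧ (i, j) ∉ c := by
  simp [stepCycle]

lemma stepCycle_of_not_mem {s : TState N M} {c : List (N × M)} {i : N}
    (h : i ∉ c.map Prod.fst) :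
    (stepCycle s c).own i = s.own i ∧ (stepCycle s c).dem i = s.dem i := by
  have hc : ∀ j, (i, j) ∉ c := fun j hj => h (List.mem_map_of_mem hj)
  have hg : ∀ j, (i, j) ∉ gives c := fun j hj => h (gives_map_fst c ▸ List.mem_map_of_mem hj)
  constructor <;> ext j
  · simp [mem_own_stepCycle, hc, hg]
  · simp [mem_dem_stepCycle, hc]

namespace ValidCycle

variable {s : TState N M} {c : List (N × M)} {i i' : N} {j j' : M}

lemma nodup (hv : ValidCycle s c) : c.Nodup := hv.2.1.of_map _

lemma gives_map_fst_nodup (hv : ValidCycle s c) : ((gives c).map Prod.fst).Nodup :=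
  gives_map_fst c ▸ hv.2.1

lemma gives_nodup (hv : ValidCycle s c) : (gives c).Nodup := hv.gives_map_fst_nodup.of_map _

lemma mem_dem (hv : ValidCycle s c) (h : (i, j) ∈ c) : j ∈ s.dem i := hv.2.2.2.1 _ h

lemma mem_own (hv : ValidCycle s c) (h : (i, j) ∈ gives c) : j ∈ s.own i := hv.2.2.2.2 _ h

lemma fst_inj (hv : ValidCycle s c) (h : (i, j) ∈ c) (h' : (i, j') ∈ c) : j = j' :=
  congrArg Prod.snd (List.inj_on_of_nodup_map hv.2.1 h h' rfl)

lemma snd_inj (hv : ValidCycle s c) (h : (i, j) ∈ c) (h' : (i', j) ∈ c) : i = i' :=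
  congrArg Prod.fst (List.inj_on_of_nodup_map hv.2.2.1 h h' rfl)

lemma gives_fst_inj (hv : ValidCycle s c) (h : (i, j) ∈ gives c) (h' : (i, j') ∈ gives c) :
    j = j' :=
  congrArg Prod.snd (List.inj_on_of_nodup_map hv.gives_map_fst_nodup h h' rfl)

end ValidCycle

structure Conforms (O D : N → Finset M) (s : TState N M) : Prop where
  dem_subset : ∀ i, s.dem i ⊆ D i
  own_subset : ∀ i, s.own i ⊆ O i ∪ D i
  disjoint : ∀ i, Disjoint (s.own i) (s.dem i)

namespace Conforms

variable {O D : N → Finset M} {s : TState N M} {c : List (N × M)} {i : N} {j : M}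

lemma init (h : ∀ i, Disjoint (O i) (D i)) : Conforms O D ⟨O, D⟩ :=
  ⟨fun _ => subset_rfl, fun _ => Finset.subset_union_left, h⟩

lemma not_mem_gives (hI : Conforms O D s) (hv : ValidCycle s c) (h : (i, j) ∈ c) :
    (i, j) ∉ gives c := fun hg =>
  Finset.disjoint_left.1 (hI.disjoint i) (hv.mem_own hg) (hv.mem_dem h)

lemma stepCycle (hI : Conforms O D s) (hv : ValidCycle s c) :
    Conforms O D (stepCycle s c) where
  dem_subset i _ hj := hI.dem_subset i (mem_dem_stepCycle.1 hj).1
  own_subset i j hj := by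
    rcases mem_own_stepCycle.1 hj with ⟨h, _⟩ | h
    exacts [hI.own_subset i h, Finset.mem_union_right _ (hI.dem_subset i (hv.mem_dem h))]
  disjoint i := Finset.disjoint_left.2 fun j hown hdem => by
    rw [mem_dem_stepCycle] at hdem
    rcases mem_own_stepCycle.1 hown with ⟨h, _⟩ | h
    exacts [Finset.disjoint_left.1 (hI.disjoint i) h hdem.1, hdem.2 h]

lemma exists_gives (hI : Conforms O D s) (hv : ValidCycle s c) (h : (i, j) ∈ c) :
    ∃ j', j' ≠ j ∧ (i, j') ∈ gives c ∧ j' ∈ s.own i := by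
  obtain ⟨⟨i', j'⟩, hp, rfl⟩ :=
    List.mem_map.1 (gives_map_fst c ▸ List.mem_map_of_mem (f := Prod.fst) h)
  exact ⟨j', fun e => hI.not_mem_gives hv h (e ▸ hp), hp, hv.mem_own hp⟩

lemma exists_giver (hI : Conforms O D s) (hv : ValidCycle s c) (h : (i, j) ∈ c) :
    ∃ i', i' ≠ i ∧ (i', j) ∈ gives c ∧ j ∈ s.own i' := by
  obtain ⟨⟨i', j'⟩, hp, rfl⟩ :=
    List.mem_map.1 ((gives_map_snd_perm c).mem_iff.2 (List.mem_map_of_mem (f := Prod.snd) h))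
  exact ⟨i', fun e => hI.not_mem_gives hv h (e ▸ hp), hp, hv.mem_own hp⟩

lemma exists_receives (hI : Conforms O D s) (hv : ValidCycle s c) (h : (i, j) ∈ gives c) :
    ∃ j', j' ≠ j ∧ (i, j') ∈ c ∧ j' ∈ s.dem i := by
  obtain ⟨⟨i', j'⟩, hp, rfl⟩ :=
    List.mem_map.1 (gives_map_fst c ▸ List.mem_map_of_mem (f := Prod.fst) h)
  exact ⟨j', fun e => hI.not_mem_gives hv hp (e ▸ h), hp, hv.mem_dem hp⟩

lemma exists_receiver (hI : Conforms O D s) (hv : ValidCycle s c) (h : (i, j) ∈ gives c) :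
    ∃ i', i' ≠ i ∧ (i', j) ∈ c ∧ j ∈ s.dem i' := by
  obtain ⟨⟨i', j'⟩, hp, rfl⟩ :=
    List.mem_map.1 ((gives_map_snd_perm c).mem_iff.1 (List.mem_map_of_mem (f := Prod.snd) h))
  exact ⟨i', fun e => hI.not_mem_gives hv hp (e ▸ h), hp, hv.mem_dem hp⟩

end Conforms

lemma exchanges_append (r r' : List (List (N × M))) :
    exchanges (r ++ r') = exchanges r + exchanges r' := by
  simp [exchanges]

def edgeRecv (r : List (List (N × M))) (p : N × M) : ℕ := (r.map (List.count p)).sum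

def edgeGive (r : List (List (N × M))) (p : N × M) : ℕ :=
  (r.map fun c => (gives c).count p).sum

lemma sum_edgeRecv {ι : Type} (F : Finset ι) (f : ι → N × M) (r : List (List (N × M))) :
    ∑ a ∈ F, edgeRecv r (f a) = (r.map fun c => ∑ a ∈ F, c.count (f a)).sum := by
  induction r with
  | nil => simp [edgeRecv]
  | cons c r ih => simp [edgeRecv, ← ih, Finset.sum_add_distrib]

lemma sum_edgeGive {ι : Type} (F : Finset ι) (f : ι → N × M) (r : List (List (N × M))) :
    ∑ a ∈ F, edgeGive r (f a) = (r.map fun c => ∑ a ∈ F, (gives c).count (f a)).sum := by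
  induction r with
  | nil => simp [edgeGive]
  | cons c r ih => simp [edgeGive, ← ih, Finset.sum_add_distrib]

namespace ValidExec

variable {O D : N → Finset M} {s : TState N M} {r : List (List (N × M))}

/-- A used demand edge is removed, so it is used at most once. -/
lemma edgeRecv_le (hr : ValidExec s r) (i : N) (j : M) :
    edgeRecv r (i, j) ≤ if j ∈ s.dem i then 1 else 0 := by
  induction r generalizing s with
  | nil => simp [edgeRecv]
  | cons c r ih =>
    obtain ⟨hv, hr⟩ := hr
    have ih := ih hr
    simp only [edgeRecv, List.map_cons, List.sum_cons, hv.nodup.count] at ih ⊢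
    by_cases hc : (i, j) ∈ c
    · simpa [hv.mem_dem hc, mem_dem_stepCycle, hc] using ih
    · simpa [hc, mem_dem_stepCycle] using ih

lemma edgeRecv_le_one (hr : ValidExec s r) (i : N) (j : M) : edgeRecv r (i, j) ≤ 1 :=
  (hr.edgeRecv_le i j).trans (by split_ifs <;> simp)

lemma edgeGive_le (hI : Conforms O D s) (hr : ValidExec s r) (i : N) (j : M) :
    edgeGive r (i, j) ≤ (if j ∈ s.own i then 1 else 0) + edgeRecv r (i, j) := by
  induction r generalizing s with
  | nil => simp [edgeGive, edgeRecv]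
  | cons c r ih =>
    obtain ⟨hv, hr⟩ := hr
    have ih := ih (hI.stepCycle hv) hr
    simp only [edgeGive, edgeRecv, List.map_cons, List.sum_cons, hv.nodup.count,
      hv.gives_nodup.count] at ih ⊢
    by_cases hg : (i, j) ∈ gives c
    · have hc : (i, j) ∉ c := fun hc => hI.not_mem_gives hv hc hg
      have hown : j ∉ (stepCycle s c).own i := by simp [mem_own_stepCycle, hg, hc]
      rw [if_neg hown] at ih
      rw [if_pos hg, if_neg hc, if_pos (hv.mem_own hg)]
      omega
    · by_cases hc : (i, j) ∈ c
      · rw [if_pos (mem_own_stepCycle.2 (Or.inr hc))] at ih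
        rw [if_neg hg, if_pos hc]
        split_ifs <;> omega
      · have hown : j ∈ (stepCycle s c).own i ↔ j ∈ s.own i := by
          simp [mem_own_stepCycle, hg, hc]
        simpa [hg, hc, hown] using ih

lemma edgeGive_le_one (hI : Conforms O D s) (hr : ValidExec s r) {i : N} {j : M}
    (h : j ∉ s.dem i) : edgeGive r (i, j) ≤ 1 := by
  have hg := hr.edgeGive_le hI i j
  have hrecv := hr.edgeRecv_le i j
  rw [if_neg h] at hrecv
  split_ifs at hg <;> omega

lemma sum_map_le_sum_map (F G : List (N × M) → ℕ)
    (H : ∀ s c, Conforms O D s → ValidCycle s c → F c ≤ G c)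
    (hI : Conforms O D s) (hr : ValidExec s r) : (r.map F).sum ≤ (r.map G).sum := by
  induction r generalizing s with
  | nil => simp
  | cons c r ih =>
    simpa using Nat.add_le_add (H s c hI hr.1) (ih (hI.stepCycle hr.1) hr.2)

lemma exchanges_le_sum_edgeRecv (E : Finset (N × M)) (hE : ∀ i, ∀ j ∈ D i, (i, j) ∈ E)
    (hI : Conforms O D s) (hr : ValidExec s r) :
    exchanges r ≤ ∑ p ∈ E, edgeRecv r p := by
  rw [exchanges, show ∑ p ∈ E, edgeRecv r p = _ from sum_edgeRecv E id r]
  refine hr.sum_map_le_sum_map _ _ (fun s c hI hv => le_of_eq ?_) hI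
  have hcE : ∀ p ∈ c, p ∈ E := fun p hp => hE _ _ (hI.dem_subset _ (hv.mem_dem hp))
  have := (Multiset.sum_count_eq_card (m := (c : Multiset (N × M))) hcE).symm
  simp only [Multiset.coe_count, Multiset.coe_card] at this
  show c.length = ∑ p ∈ E, c.count p
  convert this

end ValidExec

namespace Reduction

variable {n : ℕ} {T : Finset (Fin n × Fin n × Fin n)} {i : RAg n} {j : RIt n}
  {s : TState (RAg n) (RIt n)} {c : List (RAg n × RIt n)} {r : List (List (RAg n × RIt n))}

section Instance

variable {t : Fin n × Fin n × Fin n}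

lemma disjoint_RS_RD (i : RAg n) : Disjoint (RS n T i) (RD n T i) := by
  rcases i with ⟨t, k⟩ | y | z | x | x
  · fin_cases k <;> by_cases ht : t ∈ T <;> simp [RS, RD, ht, Fin.ext_iff]
  all_goals simp [RS, RD]

lemma RD_ga1_subset : RD n T (.ga t 1) ⊆ {.yi t.2.1} := by
  by_cases ht : t ∈ T <;> simp [RD, ht]

lemma RD_ga2_subset : RD n T (.ga t 2) ⊆ {.gi t 3} := by
  by_cases ht : t ∈ T <;> simp [RD, ht]

lemma eq_xa3_of_gi0_mem_RD (h : .gi t 0 ∈ RD n T i) : i = .xa3 t.1 := by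
  rcases i with ⟨t', k⟩ | y | z | x | x
  · fin_cases k <;> by_cases ht : t' ∈ T <;> simp_all [RD, Fin.ext_iff]
  all_goals simp_all [RD]

lemma eq_ga0_of_gi1_mem_RD (h : .gi t 1 ∈ RD n T i) : i = .ga t 0 := by
  rcases i with ⟨t', k⟩ | y | z | x | x
  · fin_cases k <;> by_cases ht : t' ∈ T <;> simp_all [RD, Fin.ext_iff]
  all_goals simp_all [RD]

lemma holdings_ga0 : RS n T (.ga t 0) ∪ RD n T (.ga t 0) ⊆ {.gi t 0, .gi t 1, .gi t 3} := by
  by_cases ht : t ∈ T <;> simp [RS, RD, ht, Finset.insert_subset_iff]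

lemma holdings_ga1 : RS n T (.ga t 1) ∪ RD n T (.ga t 1) ⊆ {.gi t 1, .yi t.2.1} := by
  by_cases ht : t ∈ T <;> simp [RS, RD, ht]

lemma mem_holdings_xa3 {x : Fin n} (h : j ∈ RS n T (.xa3 x) ∪ RD n T (.xa3 x)) :
    j = .xi x ∨ ∃ t : Fin n × Fin n × Fin n, t.1 = x ∧ j = .gi t 0 := by
  simp only [RS, RD, Finset.mem_union, Finset.mem_singleton, Finset.mem_image,
    Finset.mem_filter] at h
  rcases h with h | ⟨t, ⟨_, hx⟩, rfl⟩
  exacts [Or.inl h, Or.inr ⟨t, hx, rfl⟩]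

lemma holders_gi2 (h : .gi t 2 ∈ RS n T i ∪ RD n T i) : i = .ga t 2 ∨ i = .ya t.2.1 := by
  rcases i with ⟨t', k⟩ | y | z | x | x
  · fin_cases k <;> by_cases ht : t' ∈ T <;> simp_all [RS, RD, Fin.ext_iff]
  all_goals simp_all [RS, RD]

lemma holders_gi3 (h : .gi t 3 ∈ RS n T i ∪ RD n T i) :
    i = .za t.2.2 ∨ i = .ga t 0 ∨ i = .ga t 2 := by
  rcases i with ⟨t', k⟩ | y | z | x | x
  · fin_cases k <;> by_cases ht : t' ∈ T <;> simp_all [RS, RD, Fin.ext_iff]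
  all_goals simp_all [RS, RD]

lemma holders_yi {y : Fin n} (h : .yi y ∈ RS n T i ∪ RD n T i) :
    i = .ya y ∨ ∃ t : Fin n × Fin n × Fin n, t.2.1 = y ∧ i = .ga t 1 := by
  rcases i with ⟨t', k⟩ | y | z | x | x
  · fin_cases k <;> by_cases ht : t' ∈ T <;> simp_all [RS, RD, Fin.ext_iff]
  all_goals simp_all [RS, RD]

end Instance

lemma conforms_init : Conforms (RS n T) (RD n T) ⟨RS n T, RD n T⟩ :=
  Conforms.init disjoint_RS_RD

/-- The six demand edges of the gadget of `t = (x,y,z)`: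
`(xyz)₂ ← (xyz)₃`, `(xyz)₂ ← (xyz)₇`, `(xyz)₄ ← y₁`, `(xyz)₆ ← (xyz)₇`, `y₂ ← (xyz)₅`,
`x₃ ← (xyz)₁`. -/
def gadgetEdge (t : Fin n × Fin n × Fin n) : Fin 6 → RAg n × RIt n :=
  ![(.ga t 0, .gi t 1), (.ga t 0, .gi t 3), (.ga t 1, .yi t.2.1), (.ga t 2, .gi t 3),
    (.ya t.2.1, .gi t 2), (.xa3 t.1, .gi t 0)]

def demandEdges (n : ℕ) (T : Finset (Fin n × Fin n × Fin n)) : Finset (RAg n × RIt n) :=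
  ((T ×ˢ Finset.univ).image fun q => gadgetEdge q.1 q.2) ∪
    (Finset.univ.image fun z => (.za z, .zi z)) ∪ (Finset.univ.image fun x => (.xa1 x, .xi x))

lemma mem_demandEdges (h : j ∈ RD n T i) : (i, j) ∈ demandEdges n T := by
  have hgad : ∀ t ∈ T, ∀ k, gadgetEdge t k ∈ demandEdges n T := fun t ht k =>
    Finset.mem_union_left _ (Finset.mem_union_left _
      (Finset.mem_image.2 ⟨(t, k), by simp [ht], rfl⟩))
  rcases i with ⟨t, k⟩ | y | z | x | x
  · by_cases ht : t ∈ T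
    · fin_cases k
      · rcases (by simpa [RD, ht] using h : j = .gi t 1 ∨ j = .gi t 3) with rfl | rfl
        exacts [hgad t ht 0, hgad t ht 1]
      · obtain rfl : j = .yi t.2.1 := by simpa [RD, ht] using h
        exact hgad t ht 2
      · obtain rfl : j = .gi t 3 := by simpa [RD, ht] using h
        exact hgad t ht 3
    · simp [RD, ht] at h
  · obtain ⟨t, ⟨ht, rfl⟩, rfl⟩ : ∃ t, (t ∈ T ∧ t.2.1 = y) ∧ RIt.gi t 2 = j := by
      simpa [RD] using h
    exact hgad t ht 4
  · obtain rfl : j = .zi z := by simpa [RD] using h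
    simp [demandEdges]
  · obtain rfl : j = .xi x := by simpa [RD] using h
    simp [demandEdges]
  · obtain ⟨t, ⟨ht, rfl⟩, rfl⟩ : ∃ t, (t ∈ T ∧ t.1 = x) ∧ RIt.gi t 0 = j := by
      simpa [RD] using h
    exact hgad t ht 5

lemma sum_demandEdges_le (w : RAg n × RIt n → ℕ) :
    ∑ p ∈ demandEdges n T, w p ≤ ∑ t ∈ T, ∑ k, w (gadgetEdge t k) +
      ∑ z, w (.za z, .zi z) + ∑ x, w (.xa1 x, .xi x) := by
  have himage {ι : Type} (s : Finset ι) (f : ι → RAg n × RIt n) :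
      ∑ p ∈ s.image f, w p ≤ ∑ i ∈ s, w (f i) :=
    Finset.sum_image_le_of_nonneg fun _ _ => Nat.zero_le _
  rw [demandEdges]
  grw [Finset.sum_union_le_add, Finset.sum_union_le_add, himage, himage, himage,
    Finset.sum_product]

section Cycle

variable {t : Fin n × Fin n × Fin n} (hI : Conforms (RS n T) (RD n T) s) (hv : ValidCycle s c)
include hI hv

lemma mem_ga0_gi1_of_mem_ga1 (h : (.ga t 1, .yi t.2.1) ∈ c) : (.ga t 0, .gi t 1) ∈ c := by
  obtain ⟨j, hj, hg, hown⟩ := hI.exists_gives hv h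
  have hj1 : j = .gi t 1 := by
    simpa [hj] using holdings_ga1 (hI.own_subset _ hown)
  subst hj1
  obtain ⟨i, -, hc, hdem⟩ := hI.exists_receiver hv hg
  rwa [eq_ga0_of_gi1_mem_RD (hI.dem_subset _ hdem)] at hc

lemma mem_xa3_or_gives_gi3_of_mem_ga0_gi1 (h : (.ga t 0, .gi t 1) ∈ c) :
    (.xa3 t.1, .gi t 0) ∈ c ∨ (.ga t 0, .gi t 3) ∈ gives c := by
  obtain ⟨j, hj, hg, hown⟩ := hI.exists_gives hv h
  have := holdings_ga0 (hI.own_subset _ hown)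
  simp only [Finset.mem_insert, Finset.mem_singleton] at this
  rcases this with rfl | rfl | rfl
  · obtain ⟨i, -, hc, hdem⟩ := hI.exists_receiver hv hg
    rw [eq_xa3_of_gi0_mem_RD (hI.dem_subset _ hdem)] at hc
    exact Or.inl hc
  · exact absurd rfl hj
  · exact Or.inr hg

lemma mem_xa3_of_mem_ga0_gi3 (h : (.ga t 0, .gi t 3) ∈ c) : (.xa3 t.1, .gi t 0) ∈ c := by
  obtain ⟨j, hj, hg, hown⟩ := hI.exists_gives hv h
  have := holdings_ga0 (hI.own_subset _ hown)
  simp only [Finset.mem_insert, Finset.mem_singleton] at this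
  obtain ⟨i, hi, hc, hdem⟩ := hI.exists_receiver hv hg
  rcases this with rfl | rfl | rfl
  · rwa [eq_xa3_of_gi0_mem_RD (hI.dem_subset _ hdem)] at hc
  · exact absurd (eq_ga0_of_gi1_mem_RD (hI.dem_subset _ hdem)) hi
  · exact absurd rfl hj

lemma mem_gives_za_of_mem_ga0_gi3 (h : (.ga t 0, .gi t 3) ∈ c) :
    (.za t.2.2, .gi t 3) ∈ gives c := by
  obtain ⟨i, hi, hg, hown⟩ := hI.exists_giver hv h
  rcases holders_gi3 (hI.own_subset _ hown) with rfl | rfl | rfl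
  · exact hg
  · exact absurd rfl hi
  · obtain ⟨j, hj, -, hdem⟩ := hI.exists_receives hv hg
    exact absurd (Finset.mem_singleton.1 (RD_ga2_subset (hI.dem_subset _ hdem))) hj

lemma mem_ga2_of_mem_ya (h : (.ya t.2.1, .gi t 2) ∈ c) : (.ga t 2, .gi t 3) ∈ c := by
  obtain ⟨i, hi, hg, hown⟩ := hI.exists_giver hv h
  rcases holders_gi2 (hI.own_subset _ hown) with rfl | rfl
  · obtain ⟨j, -, hc, hdem⟩ := hI.exists_receives hv hg
    rwa [Finset.mem_singleton.1 (RD_ga2_subset (hI.dem_subset _ hdem))] at hc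
  · exact absurd rfl hi

lemma mem_gives_za_or_ga0_of_mem_ga2 (h : (.ga t 2, .gi t 3) ∈ c) :
    (.za t.2.2, .gi t 3) ∈ gives c ∨ (.ga t 0, .gi t 3) ∈ gives c := by
  obtain ⟨i, hi, hg, hown⟩ := hI.exists_giver hv h
  rcases holders_gi3 (hI.own_subset _ hown) with rfl | rfl | rfl
  exacts [Or.inl hg, Or.inr hg, absurd rfl hi]

lemma count_ga2_add_count_ga0_le :
    c.count (.ga t 2, .gi t 3) + c.count (.ga t 0, .gi t 3) ≤
      (gives c).count (.za t.2.2, .gi t 3) + (gives c).count (.ga t 0, .gi t 3) := by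
  by_cases h2 : (.ga t 2, .gi t 3) ∈ c
  · have h0 : (.ga t 0, .gi t 3) ∉ c := fun h0 => by simpa using hv.snd_inj h2 h0
    rw [List.count_eq_zero.2 h0, add_zero]
    exact hv.nodup.count_le_count_add_count (mem_gives_za_or_ga0_of_mem_ga2 hI hv)
  · rw [List.count_eq_zero.2 h2, zero_add]
    exact (hv.nodup.count_le_count (mem_gives_za_of_mem_ga0_gi3 hI hv)).trans
      (Nat.le_add_right _ _)

lemma sum_count_ga1_le (y : Fin n) :
    ∑ t ∈ T with t.2.1 = y, c.count (.ga t 1, .yi y) ≤ (gives c).count (.ya y, .yi y) := by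
  refine hv.nodup.sum_count_le_count (fun t _ t' _ h h' => ?_) fun t ht h => ?_
  · simpa using hv.snd_inj h h'
  · obtain ⟨i, hi, hg, hown⟩ := hI.exists_giver hv h
    rcases holders_yi (hI.own_subset _ hown) with rfl | ⟨t', rfl, rfl⟩
    · exact hg
    · obtain ⟨j, hj, -, hdem⟩ := hI.exists_receives hv hg
      exact absurd (Finset.mem_singleton.1 (RD_ga1_subset (hI.dem_subset _ hdem))) hj

lemma sum_count_xa3_le (x : Fin n) :
    ∑ t ∈ T with t.1 = x, c.count (.xa3 x, .gi t 0) ≤ (gives c).count (.xa3 x, .xi x) := by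
  refine hv.nodup.sum_count_le_count (fun t _ t' _ h h' => ?_) fun t ht h => ?_
  · simpa using hv.fst_inj h h'
  · obtain ⟨j, hj, hg, hown⟩ := hI.exists_gives hv h
    rcases mem_holdings_xa3 (hI.own_subset _ hown) with rfl | ⟨t', rfl, rfl⟩
    · exact hg
    · obtain ⟨i, hi, -, hdem⟩ := hI.exists_receiver hv hg
      exact absurd (eq_xa3_of_gi0_mem_RD (hI.dem_subset _ hdem)) hi

lemma sum_count_gives_za_le (z : Fin n) :
    ∑ t ∈ T with t.2.2 = z, (gives c).count (.za z, .gi t 3) ≤ c.count (.za z, .zi z) := by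
  refine hv.gives_nodup.sum_count_le_count (fun t _ t' _ h h' => ?_) fun t ht h => ?_
  · simpa using hv.gives_fst_inj h h'
  · obtain ⟨j, -, hc, hdem⟩ := hI.exists_receives hv h
    have : j = .zi z := by simpa [RD] using hI.dem_subset _ hdem
    rwa [this] at hc

end Cycle

section Execution

variable (hr : ValidExec ⟨RS n T, RD n T⟩ r) (t : Fin n × Fin n × Fin n)
include hr

lemma edgeRecv_ga1_le : edgeRecv r (.ga t 1, .yi t.2.1) ≤ edgeRecv r (.ga t 0, .gi t 1) :=
  hr.sum_map_le_sum_map _ _ (fun _ _ hI hv =>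
    hv.nodup.count_le_count (mem_ga0_gi1_of_mem_ga1 hI hv)) conforms_init

lemma edgeRecv_ga0_gi3_le_xa3 : edgeRecv r (.ga t 0, .gi t 3) ≤ edgeRecv r (.xa3 t.1, .gi t 0) :=
  hr.sum_map_le_sum_map _ _ (fun _ _ hI hv =>
    hv.nodup.count_le_count (mem_xa3_of_mem_ga0_gi3 hI hv)) conforms_init

lemma edgeRecv_ga0_gi3_le_za : edgeRecv r (.ga t 0, .gi t 3) ≤ edgeGive r (.za t.2.2, .gi t 3) :=
  hr.sum_map_le_sum_map _ _ (fun _ _ hI hv =>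
    hv.nodup.count_le_count (mem_gives_za_of_mem_ga0_gi3 hI hv)) conforms_init

lemma edgeRecv_ya_le : edgeRecv r (.ya t.2.1, .gi t 2) ≤ edgeRecv r (.ga t 2, .gi t 3) :=
  hr.sum_map_le_sum_map _ _ (fun _ _ hI hv =>
    hv.nodup.count_le_count (mem_ga2_of_mem_ya hI hv)) conforms_init

lemma edgeGive_ga0_gi3_le : edgeGive r (.ga t 0, .gi t 3) ≤ edgeRecv r (.ga t 0, .gi t 3) := by
  have := hr.edgeGive_le conforms_init (.ga t 0) (.gi t 3)
  have hS : RIt.gi t 3 ∉ RS n T (.ga t 0) := by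
    by_cases ht : t ∈ T <;> simp [RS, ht, Fin.ext_iff]
  simpa [hS] using this

lemma edgeRecv_ga0_gi1_le : edgeRecv r (.ga t 0, .gi t 1) ≤ edgeRecv r (.xa3 t.1, .gi t 0) := by
  have h := hr.sum_map_le_sum_map _ (fun c => c.count (.xa3 t.1, .gi t 0) +
      (gives c).count (.ga t 0, .gi t 3)) (fun _ _ hI hv =>
    hv.nodup.count_le_count_add_count (mem_xa3_or_gives_gi3_of_mem_ga0_gi1 hI hv)) conforms_init
  rw [List.sum_map_add] at h
  have := edgeGive_ga0_gi3_le hr t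
  have := edgeRecv_ga0_gi3_le_xa3 hr t
  have := hr.edgeRecv_le_one (.ga t 0) (.gi t 1)
  change edgeRecv r _ ≤ edgeRecv r _ + edgeGive r _ at h
  omega

lemma edgeRecv_ga2_le : edgeRecv r (.ga t 2, .gi t 3) ≤ edgeGive r (.za t.2.2, .gi t 3) := by
  have h := hr.sum_map_le_sum_map _ _ (fun _ _ hI hv => count_ga2_add_count_ga0_le (t := t) hI hv)
    conforms_init
  rw [List.sum_map_add, List.sum_map_add] at h
  have := edgeGive_ga0_gi3_le hr t
  change edgeRecv r _ + edgeRecv r _ ≤ edgeGive r _ + edgeGive r _ at h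
  omega

lemma exchanges_le : exchanges r ≤ ∑ t ∈ T, ∑ k, edgeRecv r (gadgetEdge t k) + 2 * n := by
  have hz : ∑ z : Fin n, edgeRecv r (.za z, .zi z) ≤ n := by
    simpa using Finset.sum_le_card_nsmul Finset.univ _ 1 fun z _ => hr.edgeRecv_le_one (.za z) _
  have hx : ∑ x : Fin n, edgeRecv r (.xa1 x, .xi x) ≤ n := by
    simpa using Finset.sum_le_card_nsmul Finset.univ _ 1 fun x _ => hr.edgeRecv_le_one (.xa1 x) _
  have := (hr.exchanges_le_sum_edgeRecv _ (fun _ _ => mem_demandEdges) conforms_init).trans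
    (sum_demandEdges_le (T := T) (edgeRecv r))
  omega

lemma sum_gadgetEdge_le :
    ∑ k, edgeRecv r (gadgetEdge t k) ≤
      3 * edgeRecv r (.xa3 t.1, .gi t 0) + 3 * edgeGive r (.za t.2.2, .gi t 3) := by
  simp only [Fin.sum_univ_six, gadgetEdge, Matrix.cons_val]
  have := edgeRecv_ga1_le hr t
  have := edgeRecv_ga0_gi1_le hr t
  have := edgeRecv_ga0_gi3_le_za hr t
  have := edgeRecv_ga2_le hr t
  have := edgeRecv_ya_le hr t
  omega

lemma le_of_sum_gadgetEdge_eq (h : ∑ k, edgeRecv r (gadgetEdge t k) =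
      3 * edgeRecv r (.xa3 t.1, .gi t 0) + 3 * edgeGive r (.za t.2.2, .gi t 3)) :
    edgeRecv r (.xa3 t.1, .gi t 0) ≤ edgeRecv r (.ga t 1, .yi t.2.1) ∧
      edgeGive r (.za t.2.2, .gi t 3) ≤ edgeRecv r (.xa3 t.1, .gi t 0) := by
  simp only [Fin.sum_univ_six, gadgetEdge, Matrix.cons_val] at h
  have := edgeRecv_ga1_le hr t
  have := edgeRecv_ga0_gi1_le hr t
  have := edgeRecv_ga0_gi3_le_za hr t
  have := edgeRecv_ga0_gi3_le_xa3 hr t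
  have := edgeRecv_ga2_le hr t
  have := edgeRecv_ya_le hr t
  omega

lemma sum_edgeRecv_xa3_le_one (x : Fin n) :
    ∑ t ∈ T with t.1 = x, edgeRecv r (.xa3 t.1, .gi t 0) ≤ 1 := by
  rw [Finset.sum_congr rfl fun t ht => by rw [(Finset.mem_filter.1 ht).2], sum_edgeRecv]
  refine (hr.sum_map_le_sum_map _ _ (fun _ _ hI hv => sum_count_xa3_le hI hv x)
    conforms_init).trans ?_
  exact hr.edgeGive_le_one conforms_init (by simp [RD])

lemma sum_edgeRecv_ga1_le_one (y : Fin n) :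
    ∑ t ∈ T with t.2.1 = y, edgeRecv r (.ga t 1, .yi t.2.1) ≤ 1 := by
  rw [Finset.sum_congr rfl fun t ht => by rw [(Finset.mem_filter.1 ht).2], sum_edgeRecv]
  refine (hr.sum_map_le_sum_map _ _ (fun _ _ hI hv => sum_count_ga1_le hI hv y)
    conforms_init).trans ?_
  exact hr.edgeGive_le_one conforms_init (by simp [RD])

lemma sum_edgeGive_za_le_one (z : Fin n) :
    ∑ t ∈ T with t.2.2 = z, edgeGive r (.za t.2.2, .gi t 3) ≤ 1 := by
  rw [Finset.sum_congr rfl fun t ht => by rw [(Finset.mem_filter.1 ht).2], sum_edgeGive]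
  exact (hr.sum_map_le_sum_map _ _ (fun _ _ hI hv => sum_count_gives_za_le hI hv z)
    conforms_init).trans (hr.edgeRecv_le_one (.za z) (.zi z))

end Execution

theorem exists_perfectMatching_of_validExec (hr : ValidExec ⟨RS n T, RD n T⟩ r)
    (h8n : exchanges r = 8 * n) :
    ∃ S ⊆ T, S.card = n ∧ IsPartialMatching S := by
  have hx : ∑ t ∈ T, edgeRecv r (.xa3 t.1, .gi t 0) ≤ n := by
    simpa using Finset.sum_le_card_of_sum_fiber_le_one (g := fun t : Fin n × Fin n × Fin n => t.1)
      (sum_edgeRecv_xa3_le_one hr)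
  have hz : ∑ t ∈ T, edgeGive r (.za t.2.2, .gi t 3) ≤ n := by
    simpa using Finset.sum_le_card_of_sum_fiber_le_one
      (g := fun t : Fin n × Fin n × Fin n => t.2.2) (sum_edgeGive_za_le_one hr)
  have hle := fun t (_ : t ∈ T) => sum_gadgetEdge_le hr t
  have hgad := Finset.sum_le_sum hle
  rw [Finset.sum_add_distrib, ← Finset.mul_sum, ← Finset.mul_sum] at hgad
  have hexch := exchanges_le hr
  have htight := (Finset.sum_eq_sum_iff_of_le hle).1
    (by rw [Finset.sum_add_distrib, ← Finset.mul_sum, ← Finset.mul_sum]; omega)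
  have hz1 : ∀ t ∈ T, edgeGive r (.za t.2.2, .gi t 3) ≤ 1 := fun t =>
    Finset.le_one_of_sum_fiber_le_one (g := fun t : Fin n × Fin n × Fin n => t.2.2)
      (sum_edgeGive_za_le_one hr)
  refine ⟨{t ∈ T | 0 < edgeGive r (.za t.2.2, .gi t 3)}, Finset.filter_subset _ _, ?_, ?_⟩
  · rw [Finset.card_filter_pos_eq_sum hz1]
    omega
  · refine isPartialMatching_of_sum_fiber_le_one _ _ _ (sum_edgeRecv_xa3_le_one hr)
      (sum_edgeRecv_ga1_le_one hr) (sum_edgeGive_za_le_one hr) (Finset.filter_subset _ _)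
      fun t ht => ?_
    obtain ⟨ht, hgt⟩ := Finset.mem_filter.1 ht
    have := le_of_sum_gadgetEdge_eq hr t (htight t ht)
    exact ⟨by omega, by omega, hgt⟩

section Matching

variable {t : Fin n × Fin n × Fin n}

/-- The small `X`-cycle of `t = (x,y,z)`: `x₁` receives `x₂` from `x₃`, who receives `(xyz)₁`
from `(xyz)₂`, who receives `(xyz)₇` from `z₁`, who receives `z₂` from `x₁`. -/
def xCycle (t : Fin n × Fin n × Fin n) : List (RAg n × RIt n) :=
  [(.xa1 t.1, .xi t.1), (.xa3 t.1, .gi t 0), (.ga t 0, .gi t 3), (.za t.2.2, .zi t.2.2)]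

/-- The `Y`-cycle of `t`: `(xyz)₂` receives `(xyz)₃` from `(xyz)₄`, who receives `y₁` from `y₂`,
who receives `(xyz)₅` from `(xyz)₆`, who receives `(xyz)₇` from `(xyz)₂`; so it can only run
after the small `X`-cycle has brought `(xyz)₇` to `(xyz)₂`. -/
def yCycle (t : Fin n × Fin n × Fin n) : List (RAg n × RIt n) :=
  [(.ga t 0, .gi t 1), (.ga t 1, .yi t.2.1), (.ya t.2.1, .gi t 2), (.ga t 2, .gi t 3)]

def gadgetAgents (t : Fin n × Fin n × Fin n) : List (RAg n) :=
  [.ga t 0, .ga t 1, .ga t 2, .ya t.2.1, .za t.2.2, .xa1 t.1, .xa3 t.1]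

def Untouched (T : Finset (Fin n × Fin n × Fin n)) (s : TState (RAg n) (RIt n))
    (t : Fin n × Fin n × Fin n) : Prop :=
  ∀ i ∈ gadgetAgents t, s.own i = RS n T i ∧ s.dem i = RD n T i

lemma gives_xCycle (t : Fin n × Fin n × Fin n) :
    gives (xCycle t) = [(.xa1 t.1, .zi t.2.2), (.xa3 t.1, .xi t.1), (.ga t 0, .gi t 0),
      (.za t.2.2, .gi t 3)] := rfl

lemma gives_yCycle (t : Fin n × Fin n × Fin n) :
    gives (yCycle t) = [(.ga t 0, .gi t 3), (.ga t 1, .gi t 1), (.ya t.2.1, .yi t.2.1),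
      (.ga t 2, .gi t 2)] := rfl

lemma validCycle_xCycle (ht : t ∈ T) (hU : Untouched T s t) : ValidCycle s (xCycle t) := by
  have h1 := hU (.xa1 t.1) (by simp [gadgetAgents])
  have h2 := hU (.xa3 t.1) (by simp [gadgetAgents])
  have h3 := hU (.ga t 0) (by simp [gadgetAgents])
  have h4 := hU (.za t.2.2) (by simp [gadgetAgents])
  refine ⟨by simp [xCycle], by simp [xCycle], by simp [xCycle, Fin.ext_iff], ?_, ?_⟩
  · simp [xCycle, h1.2, h2.2, h3.2, h4.2, RD, ht]
  · simp [gives_xCycle, h1.1, h2.1, h3.1, h4.1, RS, ht]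

lemma validCycle_yCycle (ht : t ∈ T) (hU : Untouched T s t) :
    ValidCycle (stepCycle s (xCycle t)) (yCycle t) := by
  have h0 := hU (.ga t 0) (by simp [gadgetAgents])
  have h1 := hU (.ga t 1) (by simp [gadgetAgents])
  have h2 := hU (.ga t 2) (by simp [gadgetAgents])
  have hy := hU (.ya t.2.1) (by simp [gadgetAgents])
  refine ⟨by simp [yCycle], by simp [yCycle], by simp [yCycle, Fin.ext_iff], ?_, ?_⟩
  · simp [yCycle, mem_dem_stepCycle, h0.2, h1.2, h2.2, hy.2, RD, ht, xCycle]
  · simp [gives_yCycle, mem_own_stepCycle, h1.1, h2.1, hy.1, RS, ht, gives_xCycle,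
      show (.ga t 0, .gi t 3) ∈ xCycle t by simp [xCycle]]

lemma Untouched.stepCycle_yCycle_xCycle {t' : Fin n × Fin n × Fin n} (hU : Untouched T s t')
    (hx : t.1 ≠ t'.1) (hy : t.2.1 ≠ t'.2.1) (hz : t.2.2 ≠ t'.2.2) :
    Untouched T (stepCycle (stepCycle s (xCycle t)) (yCycle t)) t' := by
  have hne : t ≠ t' := by rintro rfl; exact hx rfl
  intro i hi
  obtain ⟨hxi, hyi⟩ : i ∉ (xCycle t).map Prod.fst ∧ i ∉ (yCycle t).map Prod.fst := by
    simp only [gadgetAgents, List.mem_cons, List.not_mem_nil, or_false] at hi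
    rcases hi with rfl | rfl | rfl | rfl | rfl | rfl | rfl <;>
      simp [xCycle, yCycle, hne.symm, hx.symm, hy.symm, hz.symm]
  rw [(stepCycle_of_not_mem hyi).1, (stepCycle_of_not_mem hyi).2, (stepCycle_of_not_mem hxi).1,
    (stepCycle_of_not_mem hxi).2]
  exact hU i hi

lemma validExec_flatMap {l : List (Fin n × Fin n × Fin n)} (hT : ∀ t ∈ l, t ∈ T)
    (hl : l.Pairwise fun t t' => t.1 ≠ t'.1 ∧ t.2.1 ≠ t'.2.1 ∧ t.2.2 ≠ t'.2.2)
    (hU : ∀ t ∈ l, Untouched T s t) :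
    ValidExec s (l.flatMap fun t => [xCycle t, yCycle t]) := by
  induction l generalizing s with
  | nil => trivial
  | cons t l ih =>
    rw [List.pairwise_cons] at hl
    have ht := hT t List.mem_cons_self
    have hUt := hU t List.mem_cons_self
    refine ⟨validCycle_xCycle ht hUt, validCycle_yCycle ht hUt, ih (fun u hu => hT u
      (List.mem_cons_of_mem _ hu)) hl.2 fun u hu => ?_⟩
    obtain ⟨hx, hy, hz⟩ := hl.1 u hu
    exact (hU u (List.mem_cons_of_mem _ hu)).stepCycle_yCycle_xCycle hx hy hz

lemma exchanges_flatMap (l : List (Fin n × Fin n × Fin n)) :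
    exchanges (l.flatMap fun t => [xCycle t, yCycle t]) = 8 * l.length := by
  induction l with
  | nil => rfl
  | cons t l ih =>
    have h8 : exchanges [xCycle t, yCycle t] = 8 := rfl
    rw [List.flatMap_cons, exchanges_append, ih, h8, List.length_cons]
    ring

theorem exists_validExec_of_perfectMatching {S : Finset (Fin n × Fin n × Fin n)} (hST : S ⊆ T)
    (hcard : S.card = n) (hS : IsPartialMatching S) :
    ∃ r : List (List (RAg n × RIt n)), ValidExec ⟨RS n T, RD n T⟩ r ∧ exchanges r = 8 * n := by
  refine ⟨S.toList.flatMap fun t => [xCycle t, yCycle t], validExec_flatMap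
    (fun t ht => hST (Finset.mem_toList.1 ht)) ?_ fun _ _ _ _ => ⟨rfl, rfl⟩, ?_⟩
  · exact S.nodup_toList.pairwise_of_forall_ne fun t ht t' ht' hne =>
      hS t (Finset.mem_toList.1 ht) t' (Finset.mem_toList.1 ht') hne
  · rw [exchanges_flatMap, Finset.length_toList, hcard]

end Matching

end Reduction

/-- The reduction trading graph admits an execution with exactly
`8n` exchanges iff the 3D-matching instance `(X,Y,Z,T)` admits a perfect matching. -/
theorem stmt14 (n : ℕ) (T : Finset (Fin n × Fin n × Fin n)) :
    (∃ r : List (List (RAg n × RIt n)),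
        ValidExec ⟨RS n T, RD n T⟩ r ∧ exchanges r = 8 * n) ↔
    (∃ S ⊆ T, S.card = n ∧ IsPartialMatching S) :=
  ⟨fun ⟨_, hr, h8n⟩ => Reduction.exists_perfectMatching_of_validExec hr h8n,
    fun ⟨_, hST, hcard, hS⟩ => Reduction.exists_validExec_of_perfectMatching hST hcard hS⟩
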